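/- Let a vector-valued CSP instance with only linear constraints be given, let ε ∈ (0, 1/400), and let π1 : F^k → F^d and π2 : F^{k·m} → F^d be functions with p4 ≥ 1 − 4ε. Suppose σ : Fin k → (Fin d → F) and σ2 : Fin k × Fin m → (Fin d → F) satisfy Δ(π1, PWH(σ)) ≤ 24ε, Δ(π2, PWH(σ2)) ≤ 24ε (where σ2 is viewed as a tuple of k·m vectors in F^d), and σ2(p,e) = M_e · σ(p) for every p ∈ Fin k and e ∈ Fin m. Then σ is a solution of the instance, i.e., σ(u(e)) = M_e · σ(v(e)) for every e ∈ Fin m. -/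

import Mathlib

open scoped Classical

/-- The probability that a uniformly random element of a finite type `Ω`
satisfies the predicate `P`. -/
noncomputable def prob {Ω : Type*} [Fintype Ω] (P : Ω → Prop) : ℝ :=
  ((Finset.univ.filter P).card : ℝ) / (Fintype.card Ω : ℝ)

/-- Relative (Hamming) distance between two functions on a finite domain. -/
noncomputable def rdist {A B : Type*} [Fintype A] (f g : A → B) : ℝ :=
  prob (fun a => f a ≠ g a)

/-- The parallel Walsh–Hadamard encoding of an assignment `σ : ι → (Fin d → F)`:
`PWH σ b = ∑ i, b i • σ i`, as a function from `ι → F` to `Fin d → F`. -/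
def PWH {F : Type*} [CommRing F] {ι : Type*} [Fintype ι] {d : ℕ}
    (σ : ι → Fin d → F) : (ι → F) → (Fin d → F) :=
  fun b j => ∑ i, b i * σ i j

/-!
Suppose constraint `e₀` is violated, so the defect map `μ ↦ ∑ e, μ e • (σ (u e) - M e σ (v e))`
is a nonzero group homomorphism; its kernel is a proper subgroup, so a uniform `μ` misses it
with probability at least `1/2`. On the other hand, `PWH` is linear, so whenever the test
passes and both proofs agree with their encodings at all four queried points, the test
equation reads `PWH σ2 γ' = PWH σ λ'`, which says exactly that `μ` lies in that kernel.
Each query is uniformly distributed, so a union bound caps the probability of `μ` missing the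
kernel by `4ε + 4 · 24ε = 100ε < 1/2`.
-/

section Prob

variable {Ω Ω' : Type*} [Fintype Ω] [Fintype Ω']

lemma prob_eq_natCard (P : Ω → Prop) :
    prob P = Nat.card {x // P x} / Nat.card Ω := by
  simp only [prob, Nat.card_eq_fintype_card, Fintype.card_subtype]

lemma prob_or_le (P Q : Ω → Prop) : prob (fun x => P x ∨ Q x) ≤ prob P + prob Q := by
  simp only [prob_eq_natCard, ← add_div, Nat.card_eq_fintype_card]
  gcongr
  exact_mod_cast Fintype.card_subtype_or P Q

lemma prob_mono {P Q : Ω → Prop} (h : ∀ x, P x → Q x) : prob P ≤ prob Q := by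
  simp only [prob_eq_natCard]
  gcongr
  exact Nat.card_mono (Set.toFinite _) h

lemma prob_not [Nonempty Ω] (P : Ω → Prop) : prob (fun x => ¬ P x) = 1 - prob P := by
  have hΩ : (Nat.card Ω : ℝ) ≠ 0 := by simp [Nat.card_eq_fintype_card]
  rw [eq_sub_iff_add_eq]
  simp only [prob_eq_natCard, ← add_div, div_eq_one_iff_eq hΩ]
  simp only [Nat.card_eq_fintype_card]
  exact_mod_cast (Fintype.card_subtype_compl P).symm ▸
    Nat.sub_add_cancel (Fintype.card_subtype_le P)

def PreservesProb (g : Ω → Ω') : Prop :=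
  ∀ P : Ω' → Prop, prob (fun x => P (g x)) = prob P

lemma PreservesProb.comp {Ω'' : Type*} [Fintype Ω''] {g : Ω → Ω'} {h : Ω' → Ω''}
    (hh : PreservesProb h) (hg : PreservesProb g) : PreservesProb (fun x => h (g x)) :=
  fun P => (hg (fun y => P (h y))).trans (hh P)

lemma Equiv.preservesProb (e : Ω ≃ Ω') : PreservesProb e := by
  intro P
  rw [prob_eq_natCard, prob_eq_natCard, Nat.card_congr e,
    Nat.card_congr (e.subtypeEquiv fun _ => Iff.rfl)]

lemma preservesProb_fst [Nonempty Ω'] : PreservesProb (Prod.fst : Ω × Ω' → Ω) := by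
  intro P
  have hΩ' : (Nat.card Ω' : ℝ) ≠ 0 := by simp [Nat.card_eq_fintype_card]
  rw [prob_eq_natCard, prob_eq_natCard, Nat.card_congr Equiv.prodSubtypeFstEquivSubtypeProd,
    Nat.card_prod, Nat.card_prod, Nat.cast_mul, Nat.cast_mul]
  exact mul_div_mul_right _ _ hΩ'

lemma preservesProb_snd [Nonempty Ω] : PreservesProb (Prod.snd : Ω × Ω' → Ω') :=
  preservesProb_fst.comp (Equiv.prodComm Ω Ω').preservesProb (g := Equiv.prodComm Ω Ω')

lemma prob_disagree_at_two_le {A B : Type*} [Fintype A] {g₁ g₂ : Ω → A}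
    (hg₁ : PreservesProb g₁) (hg₂ : PreservesProb g₂) (f f' : A → B) :
    prob (fun x => f (g₁ x) ≠ f' (g₁ x) ∨ f (g₂ x) ≠ f' (g₂ x)) ≤ 2 * rdist f f' :=
  calc _ ≤ _ := prob_or_le _ _
    _ = 2 * rdist f f' := by
      rw [hg₁ fun a => f a ≠ f' a, hg₂ fun a => f a ≠ f' a, two_mul, rdist]

lemma half_le_prob_ne_zero {G H : Type*} [AddGroup G] [Fintype G] [AddGroup H]
    {f : G →+ H} (hf : f ≠ 0) : 1 / 2 ≤ prob (fun x => f x ≠ 0) := by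
  have hker : f.ker ≠ ⊤ := fun h => hf (AddMonoidHom.ext fun x => by
    simpa using (h ▸ AddSubgroup.mem_top x : x ∈ f.ker))
  have hindex : 2 ≤ f.ker.index := AddSubgroup.one_lt_index_of_ne_top hker
  have hcard : Nat.card {x // f x = 0} * f.ker.index = Nat.card G := f.ker.card_mul_index
  have hzero : (Nat.card {x // f x = 0} : ℝ) ≠ 0 := by
    have : Nonempty {x // f x = 0} := ⟨⟨0, map_zero f⟩⟩
    exact_mod_cast Nat.card_pos.ne'
  have hinv : (f.ker.index : ℝ)⁻¹ ≤ 1 / 2 := by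
    rw [one_div]; gcongr; exact_mod_cast hindex
  rw [prob_not (fun x => f x = 0), prob_eq_natCard, ← hcard, Nat.cast_mul,
    div_mul_cancel_left₀ hzero]
  linarith

end Prob

section ConstraintTest

variable {F : Type*} [CommRing F] {ι β : Type*} [Fintype ι] [Fintype β] {d : ℕ}

lemma PWH_eq_sum_smul (σ : ι → Fin d → F) (b : ι → F) : PWH σ b = ∑ i, b i • σ i := by
  ext j
  simp [PWH, Finset.sum_apply]

lemma PWH_add_sub (σ : ι → Fin d → F) (a b : ι → F) : PWH σ (a + b) - PWH σ a = PWH σ b := by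
  simp [PWH_eq_sum_smul, add_smul, Finset.sum_add_distrib]

variable [DecidableEq ι]

/-- The shift `λ'` of the paper. -/
def headShift (u : β → ι) (μ : β → F) : ι → F :=
  fun p => ∑ e ∈ Finset.univ.filter (fun e => u e = p), μ e

/-- The shift `γ'` of the paper. -/
def tailShift (v : β → ι) (μ : β → F) : ι × β → F :=
  fun pe => if v pe.2 = pe.1 then μ pe.2 else 0

lemma PWH_headShift (σ : ι → Fin d → F) (u : β → ι) (μ : β → F) :
    PWH σ (headShift u μ) = ∑ e, μ e • σ (u e) := by
  rw [PWH_eq_sum_smul, ← Finset.sum_fiberwise_of_maps_to fun e _ => Finset.mem_univ (u e)]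
  refine Finset.sum_congr rfl fun p _ => ?_
  rw [headShift, Finset.sum_smul]
  exact Finset.sum_congr rfl fun e he => by rw [(Finset.mem_filter.1 he).2]

lemma PWH_tailShift (τ : ι × β → Fin d → F) (v : β → ι) (μ : β → F) :
    PWH τ (tailShift v μ) = ∑ e, μ e • τ (v e, e) := by
  rw [PWH_eq_sum_smul, Fintype.sum_prod_type, Finset.sum_comm]
  simp [tailShift, ite_smul]

variable {V : Type*} [AddGroup V]

def constraintTest (π1 : (ι → F) → V) (π2 : (ι × β → F) → V) (u v : β → ι)
    (x : (β → F) × (ι → F) × (ι × β → F)) : Prop :=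
  π2 (x.2.2 + tailShift v x.1) - π2 x.2.2 = π1 (x.2.1 + headShift u x.1) - π1 x.2.1

/-- Shearing `(μ, a, b)` to `(μ, a + λ', b + γ')` turns the second query to each proof
into the first one, so it is uniformly distributed as well. -/
def testShear (u v : β → ι) :
    (β → F) × (ι → F) × (ι × β → F) ≃ (β → F) × (ι → F) × (ι × β → F) :=
  Equiv.prodShear (Equiv.refl _) fun μ =>
    (Equiv.addRight (headShift u μ)).prodCongr (Equiv.addRight (tailShift v μ))

lemma PWH_tailShift_eq_of_constraintTest {σ : ι → Fin d → F} {τ : ι × β → Fin d → F}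
    {π1 : (ι → F) → Fin d → F} {π2 : (ι × β → F) → Fin d → F} {u v : β → ι}
    {x : (β → F) × (ι → F) × (ι × β → F)} (hpass : constraintTest π1 π2 u v x)
    (ha : π1 x.2.1 = PWH σ x.2.1) (ha' : π1 (testShear u v x).2.1 = PWH σ (testShear u v x).2.1)
    (hb : π2 x.2.2 = PWH τ x.2.2) (hb' : π2 (testShear u v x).2.2 = PWH τ (testShear u v x).2.2) :
    PWH τ (tailShift v x.1) = PWH σ (headShift u x.1) := by
  rw [← PWH_add_sub τ x.2.2, ← PWH_add_sub σ x.2.1, ← ha, ← hb]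
  exact (congrArg₂ _ hb' rfl).symm.trans (hpass.trans (congrArg₂ _ ha' rfl))

end ConstraintTest

section Soundness

variable {F : Type*} [CommRing F] [Fintype F] {ι β : Type*} [Fintype ι] [Fintype β]
  [DecidableEq ι] [DecidableEq β] {d : ℕ}

theorem prob_sum_smul_ne_zero_le (σ : ι → Fin d → F) (τ : ι × β → Fin d → F)
    (π1 : (ι → F) → Fin d → F) (π2 : (ι × β → F) → Fin d → F) (u v : β → ι) :
    prob (fun μ : β → F => ∑ e, μ e • (σ (u e) - τ (v e, e)) ≠ 0)
      ≤ prob (fun x => ¬ constraintTest π1 π2 u v x)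
        + 2 * rdist π1 (PWH σ) + 2 * rdist π2 (PWH τ) := by
  set T := testShear (F := F) u v
  have hsound : ∀ x, ∑ e, x.1 e • (σ (u e) - τ (v e, e)) ≠ 0 →
      ¬ constraintTest π1 π2 u v x
        ∨ (π1 x.2.1 ≠ PWH σ x.2.1 ∨ π1 (T x).2.1 ≠ PWH σ (T x).2.1)
        ∨ (π2 x.2.2 ≠ PWH τ x.2.2 ∨ π2 (T x).2.2 ≠ PWH τ (T x).2.2) := by
    intro x hx
    by_contra! ⟨hpass, ⟨ha, ha'⟩, ⟨hb, hb'⟩⟩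
    refine hx ?_
    have := PWH_tailShift_eq_of_constraintTest hpass ha ha' hb hb'
    rw [PWH_tailShift, PWH_headShift] at this
    simp [smul_sub, Finset.sum_sub_distrib, this]
  have hfst : PreservesProb (Prod.fst : (β → F) × (ι → F) × (ι × β → F) → β → F) :=
    preservesProb_fst
  have hsnd : PreservesProb (Prod.snd : (β → F) × (ι → F) × (ι × β → F) → _) :=
    preservesProb_snd
  have h1 : prob (fun x : (β → F) × (ι → F) × (ι × β → F) =>
      π1 x.2.1 ≠ PWH σ x.2.1 ∨ π1 (T x).2.1 ≠ PWH σ (T x).2.1) ≤ 2 * rdist π1 (PWH σ) :=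
    prob_disagree_at_two_le (preservesProb_fst.comp hsnd)
      ((preservesProb_fst.comp hsnd).comp T.preservesProb) π1 (PWH σ)
  have h2 : prob (fun x : (β → F) × (ι → F) × (ι × β → F) =>
      π2 x.2.2 ≠ PWH τ x.2.2 ∨ π2 (T x).2.2 ≠ PWH τ (T x).2.2) ≤ 2 * rdist π2 (PWH τ) :=
    prob_disagree_at_two_le (preservesProb_snd.comp hsnd)
      ((preservesProb_snd.comp hsnd).comp T.preservesProb) π2 (PWH τ)
  calc prob (fun μ : β → F => ∑ e, μ e • (σ (u e) - τ (v e, e)) ≠ 0)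
      = prob (fun x : (β → F) × (ι → F) × (ι × β → F) =>
          ∑ e, x.1 e • (σ (u e) - τ (v e, e)) ≠ 0) := (hfst _).symm
    _ ≤ prob (fun x => ¬ constraintTest π1 π2 u v x
        ∨ (π1 x.2.1 ≠ PWH σ x.2.1 ∨ π1 (T x).2.1 ≠ PWH σ (T x).2.1)
        ∨ (π2 x.2.2 ≠ PWH τ x.2.2 ∨ π2 (T x).2.2 ≠ PWH τ (T x).2.2)) := prob_mono hsound
    _ ≤ prob (fun x => ¬ constraintTest π1 π2 u v x)
        + (prob (fun x => π1 x.2.1 ≠ PWH σ x.2.1 ∨ π1 (T x).2.1 ≠ PWH σ (T x).2.1)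
          + prob (fun x => π2 x.2.2 ≠ PWH τ x.2.2 ∨ π2 (T x).2.2 ≠ PWH τ (T x).2.2)) :=
      (prob_or_le _ _).trans (by gcongr; exact prob_or_le _ _)
    _ ≤ _ := by linarith

end Soundness

theorem linear_pcpp_constraint_test_general {F : Type*} [Field F] [Fintype F]
    {k m d : ℕ}
    (u v : Fin m → Fin k) (M : Fin m → Matrix (Fin d) (Fin d) F)
    {ε : ℝ} (hε1 : ε < 1 / 400)
    (π1 : (Fin k → F) → (Fin d → F)) (π2 : (Fin k × Fin m → F) → (Fin d → F))
    (hp4 :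
      prob (fun x : (Fin m → F) × (Fin k → F) × (Fin k × Fin m → F) =>
          π2 (x.2.2 + fun pe : Fin k × Fin m => if v pe.2 = pe.1 then x.1 pe.2 else 0)
              - π2 x.2.2
            = π1 (x.2.1 + fun p : Fin k =>
                ∑ e ∈ Finset.univ.filter (fun e : Fin m => u e = p), x.1 e) - π1 x.2.1)
        ≥ 1 - 4 * ε)
    (σ : Fin k → Fin d → F) (σ2 : Fin k × Fin m → Fin d → F)
    (h1 : rdist π1 (PWH σ) ≤ 24 * ε) (h2 : rdist π2 (PWH σ2) ≤ 24 * ε)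
    (hz : ∀ (p : Fin k) (e : Fin m), σ2 (p, e) = (M e).mulVec (σ p)) :
    ∀ e : Fin m, σ (u e) = (M e).mulVec (σ (v e)) := by
  by_contra! ⟨e₀, he₀⟩
  let defect := (Fintype.linearCombination F fun e => σ (u e) - σ2 (v e, e)).toAddMonoidHom
  have hdefect : defect ≠ 0 := fun h => he₀ <| by
    simpa [defect, hz, sub_eq_zero] using DFunLike.congr_fun h (Pi.single e₀ 1)
  have hpass : 1 - 4 * ε ≤ prob (constraintTest π1 π2 u v) := hp4
  have hhalf : 1 / 2 ≤ prob (fun μ : Fin m → F => ∑ e, μ e • (σ (u e) - σ2 (v e, e)) ≠ 0) := by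
    simpa [defect, Fintype.linearCombination_apply] using half_le_prob_ne_zero hdefect
  have hsound := prob_sum_smul_ne_zero_le σ σ2 π1 π2 u v
  rw [prob_not (constraintTest π1 π2 u v)] at hsound
  linarith

/-- **Constraint-test soundness** (inside the proof of Lemma 6.3).
For a vector-valued CSP instance with only linear constraints and
`ε ∈ (0, 1/400)`: if the constraint test passes with probability `p4 ≥ 1 - 4ε`,
`π1, π2` are `24ε`-close to `PWH σ` and `PWH σ2` respectively, and
`σ2 (p, e) = M e · σ p` for all `p, e`, then `σ` is a solution of the instance,
i.e. `σ (u e) = M e · σ (v e)` for every constraint `e`. -/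
theorem linear_pcpp_constraint_test {F : Type*} [Field F] [Fintype F] [CharP F 2]
    {k m d : ℕ} (hk : 1 ≤ k) (hm : 1 ≤ m) (hd : 1 ≤ d)
    (u v : Fin m → Fin k) (M : Fin m → Matrix (Fin d) (Fin d) F)
    {ε : ℝ} (hε0 : 0 < ε) (hε1 : ε < 1 / 400)
    (π1 : (Fin k → F) → (Fin d → F)) (π2 : (Fin k × Fin m → F) → (Fin d → F))
    (hp4 :
      prob (fun x : (Fin m → F) × (Fin k → F) × (Fin k × Fin m → F) =>
          π2 (x.2.2 + fun pe : Fin k × Fin m => if v pe.2 = pe.1 then x.1 pe.2 else 0)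
              - π2 x.2.2
            = π1 (x.2.1 + fun p : Fin k =>
                ∑ e ∈ Finset.univ.filter (fun e : Fin m => u e = p), x.1 e) - π1 x.2.1)
        ≥ 1 - 4 * ε)
    (σ : Fin k → Fin d → F) (σ2 : Fin k × Fin m → Fin d → F)
    (h1 : rdist π1 (PWH σ) ≤ 24 * ε) (h2 : rdist π2 (PWH σ2) ≤ 24 * ε)
    (hz : ∀ (p : Fin k) (e : Fin m), σ2 (p, e) = (M e).mulVec (σ p)) :
    ∀ e : Fin m, σ (u e) = (M e).mulVec (σ (v e)) :=
  linear_pcpp_constraint_test_general u v M hε1 π1 π2 hp4 σ σ2 h1 h2 hz
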